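/- arXiv:2405.00853 — 2 statements merged into one kernel-verified Lean document; each statement's English description precedes it below -/
import Mathlib

section
/- Let G = (V,E) be a finite simple connected graph, let H be a monophonic halfspace of G, and let {u,v} ∈ E with u ∈ H and v ∉ H. Then H = ⋃_{z ∈ H ∩ △uv} z/v, i.e., a vertex x belongs to H if and only if x lies in the monophonic shadow z/v of some z ∈ H ∩ △uv. -/
/-!
For `x ∈ H`, join `x` to `u` inside `H`, append the edge `uv` and shortcut the resulting walk to
an induced `x`–`v` path. Its last vertex `z` before `v` lies in `H`, and `z ∈ △uv`: otherwise
`u, v, z` would be an induced path and `v ∈ I(u, z) ⊆ H`. Conversely, a vertex `x ∉ H` of `z/v`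
would put `z ∈ H` on an induced path between the two vertices `x, v` of the convex set `V ∖ H`.
-/

open SimpleGraph

variable {V : Type*}

/-- A walk is an induced (chordless) path. -/
def IsInducedPath (G : SimpleGraph V) {x y : V} (p : G.Walk x y) : Prop :=
  p.IsPath ∧ ∀ a b : V, a ∈ p.support → b ∈ p.support → G.Adj a b → s(a, b) ∈ p.edges

/-- The monophonic interval between `u` and `v`: all vertices on some induced
path between `u` and `v` (empty if `u = v`). -/
def mInterval (G : SimpleGraph V) (u v : V) : Set V :=
  {z | u ≠ v ∧ ∃ p : G.Walk u v, IsInducedPath G p ∧ z ∈ p.support}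

/-- Monophonic convexity. -/
def MConvex (G : SimpleGraph V) (C : Set V) : Prop :=
  ∀ x ∈ C, ∀ y ∈ C, mInterval G x y ⊆ C

/-- Monophonic halfspace. -/
def IsMHalfspace (G : SimpleGraph V) (H : Set V) : Prop :=
  MConvex G H ∧ MConvex G Hᶜ

/-- The monophonic shadow `u/v`. -/
def mShadow (G : SimpleGraph V) (u v : V) : Set V :=
  {z | u ∈ mInterval G z v}

/-- The border `Γ(X)`: vertices of `X` with a neighbour outside `X`. -/
def border (G : SimpleGraph V) (X : Set V) : Set V :=
  {x | x ∈ X ∧ ∃ y, y ∉ X ∧ G.Adj x y}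

/-- `△⁻uv = N(u) ∩ N(v)`. -/
def triMinus (G : SimpleGraph V) (u v : V) : Set V :=
  G.neighborSet u ∩ G.neighborSet v

/-- `△uv = (N(u) ∩ N(v)) ∪ {u, v}`. -/
def triangleSet (G : SimpleGraph V) (u v : V) : Set V :=
  (G.neighborSet u ∩ G.neighborSet v) ∪ {u, v}

/-- `□uv`: vertices appearing in some 4-cycle of `G` having `{u,v}` as an edge. -/
def squareSet (G : SimpleGraph V) (u v : V) : Set V :=
  {x | ∃ a b : V, G.Adj v a ∧ G.Adj a b ∧ G.Adj b u ∧
    a ≠ u ∧ a ≠ v ∧ b ≠ u ∧ b ≠ v ∧ a ≠ b ∧ (x = u ∨ x = v ∨ x = a ∨ x = b)}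

/-- `A = □uv \ △⁻uv`. -/
def setA (G : SimpleGraph V) (u v : V) : Set V :=
  squareSet G u v \ triMinus G u v

/-- `Aᵘ = {x ∈ A : d(x,u) < d(x,v)}`. -/
noncomputable def setAu (G : SimpleGraph V) (u v : V) : Set V :=
  {x ∈ setA G u v | G.dist x u < G.dist x v}

/-- `Aᵛ = A \ Aᵘ`. -/
noncomputable def setAv (G : SimpleGraph V) (u v : V) : Set V :=
  setA G u v \ setAu G u v

/-- The graph obtained from `G` by deleting all edges of the induced subgraph `G[S]`. -/
def delInduced (G : SimpleGraph V) (S : Set V) : SimpleGraph V where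
  Adj a b := G.Adj a b ∧ ¬(a ∈ S ∧ b ∈ S)
  symm := by
    constructor
    intro a b h
    exact ⟨h.1.symm, fun hc => h.2 ⟨hc.2, hc.1⟩⟩
  loopless := ⟨fun a h => G.loopless.irrefl a h.1⟩

/-- The graph `T = G \ E(G[□uv ∪ △⁻uv])`. -/
def graphT (G : SimpleGraph V) (u v : V) : SimpleGraph V :=
  delInduced G (squareSet G u v ∪ triMinus G u v)

/-- The monophonic convex hull of `X`. -/
def mHull (G : SimpleGraph V) (X : Set V) : Set V :=
  ⋂₀ {C | MConvex G C ∧ X ⊆ C}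

/-- `S` is an `(a,b)`-separator: every walk from `a` to `b` meets `S`. -/
def IsSeparator (G : SimpleGraph V) (S : Set V) (a b : V) : Prop :=
  ∀ p : G.Walk a b, ∃ s ∈ S, s ∈ p.support

/-- The cutset `δ(X)` as a set of edges. -/
def cutset (G : SimpleGraph V) (X : Set V) : Set (Sym2 V) :=
  {e | e ∈ G.edgeSet ∧ ∃ a b : V, e = s(a, b) ∧ a ∈ X ∧ b ∉ X}

/-- A family of sets `ℋ` shatters a set `S`. -/
def Shatters (ℋ : Set (Set V)) (S : Set V) : Prop :=
  ∀ T ⊆ S, ∃ H ∈ ℋ, H ∩ S = T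

/-- `G` is `S₄` for monophonic convexity: disjoint m-convex sets are
halfspace separable. -/
def IsS4 (G : SimpleGraph V) : Prop :=
  ∀ C₁ C₂ : Set V, MConvex G C₁ → MConvex G C₂ → Disjoint C₁ C₂ →
    ∃ H : Set V, IsMHalfspace G H ∧ C₁ ⊆ H ∧ C₂ ⊆ Hᶜ

namespace SimpleGraph.Walk

variable {G : SimpleGraph V} {x y : V}

lemma isInducedPath_cons_cons_nil {a b c : V} (hab : G.Adj a b) (hbc : G.Adj b c)
    (hac : a ≠ c) (hnac : ¬G.Adj a c) : IsInducedPath G (cons hab (cons hbc nil)) := by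
  refine ⟨by simp [hab.ne, hbc.ne, hac], fun d e hd he hde => ?_⟩
  simp only [support_cons, support_nil, List.mem_cons, List.not_mem_nil, or_false] at hd he
  rcases hd with rfl | rfl | rfl <;> rcases he with rfl | rfl | rfl <;>
    simp_all [Sym2.eq_swap, G.adj_comm]

lemma exists_length_lt_of_adj_of_mem_support [DecidableEq V] {w b : V} (h : G.Adj x w)
    (p : G.Walk w y) (hb : b ∈ p.support) (hxb : G.Adj x b) (hbw : b ≠ w) :
    ∃ q : G.Walk x y, q.length < (cons h p).length ∧ q.support ⊆ (cons h p).support := by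
  refine ⟨cons hxb (p.dropUntil b hb), ?_, ?_⟩
  · simpa using length_dropUntil_lt_length hb hbw
  · simpa using List.cons_subset_cons x (p.support_dropUntil_subset_support hb)

lemma exists_length_lt_of_chord [DecidableEq V] (p : G.Walk x y) {a b : V}
    (ha : a ∈ p.support) (hb : b ∈ p.support) (hab : G.Adj a b) (hchord : s(a, b) ∉ p.edges) :
    ∃ q : G.Walk x y, q.length < p.length ∧ q.support ⊆ p.support := by
  induction p generalizing a b with
  | nil => simp_all
  | @cons x w y h p ih =>
    rw [support_cons, List.mem_cons] at ha hb
    rw [edges_cons, List.mem_cons, not_or] at hchord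
    rcases ha with rfl | ha <;> rcases hb with rfl | hb
    · exact (hab.ne rfl).elim
    · exact exists_length_lt_of_adj_of_mem_support h p hb hab (by rintro rfl; simp at hchord)
    · exact exists_length_lt_of_adj_of_mem_support h p ha hab.symm
        (by rintro rfl; simp [Sym2.eq_swap] at hchord)
    · obtain ⟨q, hlt, hsub⟩ := ih ha hb hab hchord.2
      exact ⟨cons h q, by simpa using hlt, List.cons_subset_cons x hsub⟩

theorem exists_isInducedPath_support_subset (p : G.Walk x y) :
    ∃ q : G.Walk x y, IsInducedPath G q ∧ q.support ⊆ p.support := by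
  classical
  induction hn : p.length using Nat.strong_induction_on generalizing p with
  | _ n ih =>
    subst hn
    have descend : ∀ q : G.Walk x y, q.length < p.length → q.support ⊆ p.support →
        ∃ r : G.Walk x y, IsInducedPath G r ∧ r.support ⊆ p.support := fun q hlt hsub =>
      (ih _ hlt q rfl).imp fun r hr => ⟨hr.1, List.Subset.trans hr.2 hsub⟩
    by_cases hpath : p.IsPath
    · by_cases hchordless : ∀ a b, a ∈ p.support → b ∈ p.support → G.Adj a b → s(a, b) ∈ p.edges
      · exact ⟨p, ⟨hpath, hchordless⟩, List.Subset.refl _⟩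
      · push Not at hchordless
        obtain ⟨a, b, ha, hb, hab, hchord⟩ := hchordless
        obtain ⟨q, hlt, hsub⟩ := p.exists_length_lt_of_chord ha hb hab hchord
        exact descend q hlt hsub
    · refine descend p.bypass (lt_of_le_of_ne p.length_bypass_le_length fun heq => ?_)
        p.support_bypass_subset_support
      exact hpath (p.bypass_eq_self_of_length_le_length_bypass heq.ge ▸ p.bypass_isPath)

end SimpleGraph.Walk

theorem SimpleGraph.Connected.exists_isInducedPath {G : SimpleGraph V} (hG : G.Connected)
    (x y : V) :
    ∃ p : G.Walk x y, IsInducedPath G p :=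
  let ⟨p⟩ := hG.preconnected x y
  (p.exists_isInducedPath_support_subset).imp fun _ hq => hq.1

namespace MConvex

variable {G : SimpleGraph V} {C : Set V}

lemma exists_walk_support_subset (hC : MConvex G C) (hG : G.Connected) {x y : V}
    (hx : x ∈ C) (hy : y ∈ C) : ∃ p : G.Walk x y, ∀ w ∈ p.support, w ∈ C := by
  by_cases hxy : x = y
  · subst hxy
    exact ⟨Walk.nil, by simpa using hx⟩
  · obtain ⟨p, hp⟩ := hG.exists_isInducedPath x y
    exact ⟨p, fun w hw => hC x hx y hy ⟨hxy, p, hp, hw⟩⟩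

lemma exists_adj_mem_mInterval (hC : MConvex G C) (hG : G.Connected) {x u v : V}
    (hx : x ∈ C) (hu : u ∈ C) (huv : G.Adj u v) (hv : v ∉ C) :
    ∃ z ∈ C, G.Adj z v ∧ z ∈ mInterval G x v := by
  obtain ⟨p, hpC⟩ := hC.exists_walk_support_subset hG hx hu
  obtain ⟨q, hq, hqp⟩ := (p.concat huv).exists_isInducedPath_support_subset
  have hxv : x ≠ v := fun h => hv (h ▸ hx)
  have hadj : G.Adj q.penultimate v := Walk.adj_penultimate (Walk.not_nil_of_ne hxv)
  have hmem : q.penultimate ∈ p.support ++ [v] := by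
    simpa using hqp (q.getVert_mem_support _)
  refine ⟨q.penultimate, ?_, hadj, hxv, q, hq, q.getVert_mem_support _⟩
  rw [List.mem_append, List.mem_singleton] at hmem
  exact hmem.elim (hpC _) fun h => absurd h hadj.ne

lemma mem_triangleSet (hC : MConvex G C) {u v z : V} (hu : u ∈ C) (hz : z ∈ C)
    (huv : G.Adj u v) (hzv : G.Adj z v) (hv : v ∉ C) : z ∈ triangleSet G u v := by
  by_contra hzuv
  have hzu : u ≠ z := fun h => hzuv (by simp [triangleSet, h])
  have hnuz : ¬G.Adj u z := fun h => hzuv (Or.inl ⟨h, hzv.symm⟩)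
  exact hv (hC u hu z hz
    ⟨hzu, _, Walk.isInducedPath_cons_cons_nil huv hzv.symm hzu hnuz, by simp⟩)

lemma mShadow_subset (hC : MConvex G Cᶜ) {z v : V} (hz : z ∈ C) (hv : v ∉ C) :
    mShadow G z v ⊆ C := fun x hx => by
  by_contra hxC
  exact hC x hxC v hv hx hz

end MConvex

theorem mhalfspace_eq_iUnion_shadows_general (G : SimpleGraph V)
    (hG : G.Connected) (H : Set V) (hH : IsMHalfspace G H)
    (u v : V) (huv : G.Adj u v) (hu : u ∈ H) (hv : v ∉ H) :
    H = ⋃ z ∈ H ∩ triangleSet G u v, mShadow G z v := by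
  refine subset_antisymm (fun x hx => ?_) (Set.iUnion₂_subset fun z hz => ?_)
  · obtain ⟨z, hzH, hzv, hxz⟩ := hH.1.exists_adj_mem_mInterval hG hx hu huv hv
    exact Set.mem_biUnion ⟨hzH, hH.1.mem_triangleSet hu hzH huv hzv hv⟩ hxz
  · exact hH.2.mShadow_subset hz.1 hv

/-- `H = ⋃_{z ∈ H ∩ △uv} z/v`. -/
theorem mhalfspace_eq_iUnion_shadows [Fintype V] (G : SimpleGraph V)
    (hG : G.Connected) (H : Set V) (hH : IsMHalfspace G H)
    (u v : V) (huv : G.Adj u v) (hu : u ∈ H) (hv : v ∉ H) :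
    H = ⋃ z ∈ H ∩ triangleSet G u v, mShadow G z v :=
  mhalfspace_eq_iUnion_shadows_general G hG H hH u v huv hu hv
end

section
/- Let G = (V,E) be a finite simple connected graph, let H be a monophonic halfspace of G, and let {u,v} ∈ E with u ∈ H and v ∉ H. Then Aᵘ ⊆ H and Aᵛ ⊆ V∖H. -/
open SimpleGraph

variable {V : Type*}

/-!
A vertex of `A` other than `u`, `v` is a neighbour of exactly one of `u`, `v`. A neighbour `b` of
`u` not adjacent to `v` gives the induced path `v - u - b`, so `b ∉ H` would put `u` into the
convex set `Hᶜ`; symmetrically for neighbours of `v`. The distance condition defining `Aᵘ` picks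
out exactly the private neighbours of `u` (and `u` itself).
-/

namespace SimpleGraph

variable {G : SimpleGraph V} {u v x y z : V}

lemma mem_mInterval_of_adj_of_adj (hxy : G.Adj x y) (hyz : G.Adj y z) (hxz : ¬G.Adj x z)
    (hne : x ≠ z) : y ∈ mInterval G x z := by
  refine ⟨hne, .cons hxy (.cons hyz .nil), ⟨?_, ?_⟩, by simp⟩
  · simp [Walk.isPath_def, hxy.ne, hyz.ne, hne]
  · intro a b ha hb hab
    simp only [Walk.support_cons, Walk.support_nil, List.mem_cons,
      List.not_mem_nil, or_false] at ha hb
    simp only [Walk.edges_cons, Walk.edges_nil, List.mem_cons, List.not_mem_nil, or_false]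
    rcases ha with rfl | rfl | rfl <;> rcases hb with rfl | rfl | rfl <;>
      first
        | exact absurd hab (G.irrefl)
        | exact absurd hab hxz
        | exact absurd hab.symm hxz
        | simp [Sym2.eq_swap]

lemma MConvex.mem_of_adj_of_adj {C : Set V} (hC : MConvex G C) (hx : x ∈ C) (hz : z ∈ C)
    (hxy : G.Adj x y) (hyz : G.Adj y z) (hxz : ¬G.Adj x z) (hne : x ≠ z) : y ∈ C :=
  hC x hx z hz (mem_mInterval_of_adj_of_adj hxy hyz hxz hne)

lemma IsMHalfspace.compl {H : Set V} (hH : IsMHalfspace G H) : IsMHalfspace G Hᶜ :=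
  ⟨hH.2, by simpa only [compl_compl] using hH.1⟩

lemma IsMHalfspace.mem_of_adj_of_not_adj {H : Set V} (hH : IsMHalfspace G H) (huv : G.Adj u v)
    (hu : u ∈ H) (hv : v ∉ H) (hux : G.Adj u x) (hvx : ¬G.Adj v x) (hxv : x ≠ v) : x ∈ H := by
  by_contra hx
  exact hH.2.mem_of_adj_of_adj hv hx huv.symm hux hvx hxv.symm hu

lemma adj_of_dist_le_of_adj (hxy : G.Adj x y) (hxz : G.Reachable x z) (hne : x ≠ z)
    (hle : G.dist x z ≤ G.dist x y) : G.Adj x z := by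
  rw [dist_eq_one_iff_adj.mpr hxy] at hle
  exact dist_eq_one_iff_adj.mp (le_antisymm hle (hxz.pos_dist_of_ne hne))

lemma mem_setA_cases (hx : x ∈ setA G u v) :
    x = u ∨ x = v ∨ (G.Adj v x ∧ ¬G.Adj u x ∧ x ≠ u) ∨ (G.Adj u x ∧ ¬G.Adj v x ∧ x ≠ v) := by
  obtain ⟨⟨a, b, hva, -, hbu, hau, -, -, hbv, -, rfl | rfl | rfl | rfl⟩, hxtri⟩ := hx
  · exact .inl rfl
  · exact .inr (.inl rfl)
  · exact .inr (.inr (.inl ⟨hva, fun hua => hxtri ⟨hua, hva⟩, hau⟩))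
  · exact .inr (.inr (.inr ⟨hbu.symm, fun hvb => hxtri ⟨hbu.symm, hvb⟩, hbv⟩))

end SimpleGraph

theorem setAu_subset_and_setAv_subset_general (G : SimpleGraph V)
    (H : Set V) (hH : IsMHalfspace G H)
    (u v : V) (huv : G.Adj u v) (hu : u ∈ H) (hv : v ∉ H) :
    setAu G u v ⊆ H ∧ setAv G u v ⊆ Hᶜ := by
  constructor
  · rintro x ⟨hxA, hlt⟩
    rcases mem_setA_cases hxA with rfl | rfl | ⟨hvx, hux, hxu⟩ | ⟨hux, hvx, hxv⟩
    · exact hu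
    · simp at hlt
    · exact absurd (adj_of_dist_le_of_adj hvx.symm (hvx.symm.reachable.trans huv.symm.reachable)
        hxu hlt.le).symm hux
    · exact hH.mem_of_adj_of_not_adj huv hu hv hux hvx hxv
  · rintro x ⟨hxA, hnAu⟩
    have hle : G.dist x v ≤ G.dist x u := not_lt.mp fun hlt => hnAu ⟨hxA, hlt⟩
    rcases mem_setA_cases hxA with rfl | rfl | ⟨hvx, hux, hxu⟩ | ⟨hux, hvx, hxv⟩
    · exact absurd hle <| by
        simpa only [dist_self, not_le] using huv.reachable.pos_dist_of_ne huv.ne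
    · exact hv
    · exact hH.compl.mem_of_adj_of_not_adj huv.symm hv (not_not.mpr hu) hvx hux hxu
    · exact absurd (adj_of_dist_le_of_adj hux.symm (hux.symm.reachable.trans huv.reachable)
        hxv hle).symm hvx

/-- `Aᵘ ⊆ H` and `Aᵛ ⊆ V∖H`. -/
theorem setAu_subset_and_setAv_subset [Fintype V] (G : SimpleGraph V)
    (hG : G.Connected) (H : Set V) (hH : IsMHalfspace G H)
    (u v : V) (huv : G.Adj u v) (hu : u ∈ H) (hv : v ∉ H) :
    setAu G u v ⊆ H ∧ setAv G u v ⊆ Hᶜ :=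
  setAu_subset_and_setAv_subset_general G H hH u v huv hu hv
end
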